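/- arXiv:1508.06469 — 7 statements merged into one kernel-verified Lean document; each statement's English description precedes it below -/
import Mathlib

section
/- For every k ≥ 0, the power sum L_1^k + L_2^k + ... + L_r^k of the Jucys-Murphy elements lies in the center of the group algebra ℂ[S_r]. -/
/-!
The adjacent transpositions `s_i = (i, i+1)` generate `S_r`, so it suffices that each `s_i`
commutes with the power sum. It fixes `j ∉ {i, i+1}` and preserves `{m | m < j}`, hence commutes
with `L_j`. The remaining pair satisfies `L_{i+1} = s_i L_i s_i + s_i`, i.e. the degenerate affine
Hecke relations `s_i L_{i+1} = L_i s_i + 1` and `L_{i+1} s_i = s_i L_i + 1`; since `L_i` and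
`L_{i+1}` commute, these force `s_i` to commute with `L_i^k + L_{i+1}^k`: telescoping gives
`s_i L_{i+1}^k - L_i^k s_i = ∑ L_i^m L_{i+1}^(k-1-m) = L_{i+1}^k s_i - s_i L_i^k`.
-/

/-- The Jucys-Murphy element `L_k = ∑_{j<k} (j,k)` of the group algebra `ℂ[S_r]`. -/
noncomputable def JM (r : ℕ) (k : Fin r) : MonoidAlgebra ℂ (Equiv.Perm (Fin r)) :=
  ∑ j ∈ Finset.univ.filter (fun j => j < k),
    MonoidAlgebra.of ℂ (Equiv.Perm (Fin r)) (Equiv.swap j k)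

open Equiv Finset MonoidAlgebra

section Ring

variable {A : Type*} [Ring A]

theorem mul_pow_sub_pow_mul (s a b : A) (k : ℕ) :
    s * b ^ k - a ^ k * s = ∑ m ∈ range k, a ^ m * (s * b - a * s) * b ^ (k - 1 - m) := by
  have htel := sum_range_sub' (fun m => a ^ m * s * b ^ (k - m)) k
  simp only [pow_zero, one_mul, Nat.sub_zero, Nat.sub_self, mul_one] at htel
  rw [← htel]
  refine sum_congr rfl fun m hm => ?_
  have hmk := mem_range.1 hm
  rw [show k - m = k - 1 - m + 1 by omega, show k - (m + 1) = k - 1 - m by omega, pow_succ',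
    pow_succ]
  noncomm_ring

theorem Commute.pow_add_pow_of_mul_eq_mul_add {s a b c : A} (hab : Commute a b)
    (hca : Commute c a) (hcb : Commute c b) (h₁ : s * b = a * s + c) (h₂ : b * s = s * a + c)
    (k : ℕ) : Commute s (a ^ k + b ^ k) := by
  have hterm : ∀ x y : A, Commute c x → ∀ m, x ^ m * c * y ^ (k - 1 - m) =
      c * (x ^ m * y ^ (k - 1 - m)) := fun x y hcx m => by
    rw [← (hcx.pow_right m).eq, mul_assoc]
  have e₁ : s * b ^ k - a ^ k * s = c * ∑ m ∈ range k, a ^ m * b ^ (k - 1 - m) := by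
    rw [mul_pow_sub_pow_mul, mul_sum, h₁, add_sub_cancel_left]
    exact sum_congr rfl fun m _ => hterm a b hca m
  have e₂ : s * a ^ k - b ^ k * s = -(c * ∑ m ∈ range k, a ^ m * b ^ (k - 1 - m)) := by
    rw [mul_pow_sub_pow_mul, hab.geom_sum₂_comm, mul_sum, ← sum_neg_distrib,
      show s * a - b * s = -c by rw [h₂]; abel]
    exact sum_congr rfl fun m _ => by rw [mul_neg, neg_mul, hterm b a hcb m]
  rw [Commute, SemiconjBy, ← sub_eq_zero]
  calc s * (a ^ k + b ^ k) - (a ^ k + b ^ k) * s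
      = (s * b ^ k - a ^ k * s) + (s * a ^ k - b ^ k * s) := by noncomm_ring
    _ = 0 := by rw [e₁, e₂, add_neg_cancel]

end Ring

theorem MonoidAlgebra.mem_center_of_commute_of_mem_closure {k G : Type*} [CommSemiring k]
    [Monoid G] {S : Set G} (hS : Submonoid.closure S = ⊤) {x : MonoidAlgebra k G}
    (h : ∀ g ∈ S, Commute (of k G g) x) : x ∈ Subalgebra.center k (MonoidAlgebra k G) := by
  have hof (g : G) : Commute (of k G g) x := by
    have hg : g ∈ Submonoid.closure S := hS ▸ Submonoid.mem_top g
    induction hg using Submonoid.closure_induction with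
    | mem g hg => exact h g hg
    | one => rw [map_one]; exact Commute.one_left x
    | mul g g' _ _ hg hg' => rw [map_mul]; exact hg.mul_left hg'
  rw [Subalgebra.mem_center_iff]
  intro y
  induction y using MonoidAlgebra.induction_on with
  | of g => exact hof g
  | add y z hy hz => exact Commute.add_left hy hz
  | smul c y hy => exact Commute.smul_left hy c

theorem Equiv.swap_apply_lt_iff {α : Type*} [LinearOrder α] [DecidableEq α] {a b c : α}
    (h : a < c ↔ b < c) (x : α) : swap a b x < c ↔ x < c := by
  rcases eq_or_ne x a with rfl | hxa
  · rw [swap_apply_left]; exact h.symm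
  rcases eq_or_ne x b with rfl | hxb
  · rw [swap_apply_right]; exact h
  rw [swap_apply_of_ne_of_ne hxa hxb]

section JucysMurphy

variable {r : ℕ}

theorem commute_of_JM (σ : Perm (Fin r)) {c : Fin r} (hc : σ c = c)
    (h : ∀ m, σ m < c ↔ m < c) : Commute (of ℂ _ σ) (JM r c) := by
  show of ℂ _ σ * JM r c = JM r c * of ℂ _ σ
  simp only [JM, mul_sum, sum_mul, ← map_mul]
  refine sum_equiv σ (by simp [h]) fun m _ => ?_
  rw [mul_swap_eq_swap_mul, hc]

theorem commute_JM_of_lt {c d : Fin r} (hcd : c < d) : Commute (JM r c) (JM r d) := by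
  rw [JM]
  refine Commute.sum_left _ _ _ fun m hm => ?_
  have hmd : m < d := (mem_filter.1 hm).2.trans hcd
  exact commute_of_JM _ (swap_apply_of_ne_of_ne hmd.ne' hcd.ne')
    (swap_apply_lt_iff (iff_of_true hmd hcd))

theorem JM_succ (i : Fin r) :
    JM (r + 1) i.succ = of ℂ _ (swap i.castSucc i.succ) * JM (r + 1) i.castSucc *
      of ℂ _ (swap i.castSucc i.succ) + of ℂ _ (swap i.castSucc i.succ) := by
  have hlt : univ.filter (· < i.succ) = insert i.castSucc (univ.filter (· < i.castSucc)) := by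
    ext j
    simp only [mem_filter, mem_univ, true_and, mem_insert, Fin.lt_def, Fin.ext_iff,
      Fin.val_succ, Fin.val_castSucc]
    omega
  unfold JM
  rw [hlt, sum_insert (by simp), add_comm (of ℂ _ _), mul_sum, sum_mul]
  refine congrArg (· + _) (sum_congr rfl fun j hj => ?_)
  have hj : j < i.castSucc := (mem_filter.1 hj).2
  have hconj := swap_apply_apply (swap i.castSucc i.succ) j i.castSucc
  rw [swap_inv, swap_apply_left,
    swap_apply_of_ne_of_ne hj.ne (hj.trans (Fin.castSucc_lt_succ (i := i))).ne] at hconj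
  rw [← map_mul, ← map_mul, hconj]

theorem of_swap_mul_of_swap (a b : Fin r) : of ℂ _ (swap a b) * of ℂ _ (swap a b) = 1 := by
  rw [← map_mul, swap_mul_self, map_one]

theorem of_swap_mul_JM_succ (i : Fin r) :
    of ℂ _ (swap i.castSucc i.succ) * JM (r + 1) i.succ =
      JM (r + 1) i.castSucc * of ℂ _ (swap i.castSucc i.succ) + 1 := by
  rw [JM_succ, mul_add, ← mul_assoc, ← mul_assoc, of_swap_mul_of_swap, one_mul]

theorem JM_succ_mul_of_swap (i : Fin r) :
    JM (r + 1) i.succ * of ℂ _ (swap i.castSucc i.succ) =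
      of ℂ _ (swap i.castSucc i.succ) * JM (r + 1) i.castSucc + 1 := by
  rw [JM_succ, add_mul, mul_assoc, of_swap_mul_of_swap, mul_one]

theorem commute_of_swap_JM_pow_add_pow (i : Fin r) (k : ℕ) :
    Commute (of ℂ _ (swap i.castSucc i.succ))
      (JM (r + 1) i.castSucc ^ k + JM (r + 1) i.succ ^ k) :=
  (commute_JM_of_lt (Fin.castSucc_lt_succ (i := i))).pow_add_pow_of_mul_eq_mul_add
    (Commute.one_left _) (Commute.one_left _) (of_swap_mul_JM_succ i) (JM_succ_mul_of_swap i) k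

theorem commute_of_swap_JM_of_ne (i : Fin r) {j : Fin (r + 1)} (hi : j ≠ i.castSucc)
    (hi' : j ≠ i.succ) : Commute (of ℂ _ (swap i.castSucc i.succ)) (JM (r + 1) j) := by
  refine commute_of_JM _ (swap_apply_of_ne_of_ne hi hi') (swap_apply_lt_iff ?_)
  simp only [Fin.lt_def, Fin.val_succ, Fin.val_castSucc]
  simp only [ne_eq, Fin.ext_iff, Fin.val_succ, Fin.val_castSucc] at hi hi'
  omega

end JucysMurphy

/-- For every `k ≥ 0`, the power sum `L_1^k + ⋯ + L_r^k` of the Jucys-Murphy elements lies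
in the center of the group algebra `ℂ[S_r]`. -/
theorem powerSum_jucysMurphy_mem_center (r k : ℕ) :
    (∑ j : Fin r, JM r j ^ k) ∈
      Subalgebra.center ℂ (MonoidAlgebra ℂ (Equiv.Perm (Fin r))) := by
  cases r with
  | zero => simp
  | succ r =>
    refine mem_center_of_commute_of_mem_closure (Perm.mclosure_swap_castSucc_succ r) ?_
    rintro _ ⟨i, rfl⟩
    have hi := Fin.castSucc_lt_succ (i := i)
    rw [← sum_add_sum_compl {i.castSucc, i.succ}, sum_pair hi.ne]
    refine (commute_of_swap_JM_pow_add_pow i k).add_right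
      (Commute.sum_right _ _ _ fun j hj => ?_)
    simp only [mem_compl, mem_insert, mem_singleton, not_or] at hj
    exact (commute_of_swap_JM_of_ne i hj.1 hj.2).pow_right k
end

section
/- Let (a_1,...,a_r,b_1,...,b_s) and (c_1,...,c_r,d_1,...,d_s) be tuples of complex numbers. Then every supersymmetric polynomial p in r + s variables takes the same value on both tuples if and only if the equality ∏_{i=1}^r (1 + a_i z) / ∏_{j=1}^s (1 − b_j z) = ∏_{i=1}^r (1 + c_i z) / ∏_{j=1}^s (1 − d_j z) holds as rational functions in z. -/
/-!
Both conditions say that the multisets `{aᵢ} + {-dⱼ}` and `{cᵢ} + {-bⱼ}` coincide.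

For the rational functions, clear denominators: over a multiset `M` of known size,
`∏ (1 + m z)` is the reflection of `∏ (z + m)`, whose roots recover `M`.

If every supersymmetric polynomial agrees on the two tuples, then so do the power sums
`Σ xᵢᵏ - Σ (-yⱼ)ᵏ`, and in characteristic zero power sums determine a multiset. Conversely, a
supersymmetric polynomial is invariant under permuting the `x`'s, permuting the `y`'s, and
replacing a cancelling pair `xᵢ = t, yⱼ = -t` by any other cancelling pair `xᵢ = t', yⱼ = -t'`.
When the multisets agree, finitely many such moves lead from `(a, b)` to `(c, d)`.
-/

/-- The substitution `x_r ↦ t`, `y_1 ↦ −t` (leaving all other variables fixed), on polynomials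
in variables `x_1, …, x_{r+1}, y_1, …, y_{s+1}` (the `x`'s indexed by `Fin (r+1)` via `Sum.inl`
and the `y`'s indexed by `Fin (s+1)` via `Sum.inr`). -/
noncomputable def cancelSub (r s : ℕ) (t : ℂ) :
    MvPolynomial (Fin (r + 1) ⊕ Fin (s + 1)) ℂ →ₐ[ℂ]
      MvPolynomial (Fin (r + 1) ⊕ Fin (s + 1)) ℂ :=
  MvPolynomial.aeval fun i =>
    if i = Sum.inl (Fin.last r) then MvPolynomial.C t
    else if i = Sum.inr 0 then MvPolynomial.C (-t)
    else MvPolynomial.X i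

/-- A polynomial in `x_1, …, x_{r+1}, y_1, …, y_{s+1}` is supersymmetric if it is symmetric
in the `x`-variables, symmetric in the `y`-variables, and the substitution of the last
`x`-variable by `t` and the first `y`-variable by `−t` yields a result independent of `t`. -/
def IsSupersymmetric (r s : ℕ) (p : MvPolynomial (Fin (r + 1) ⊕ Fin (s + 1)) ℂ) : Prop :=
  (∀ σ : Equiv.Perm (Fin (r + 1)),
      MvPolynomial.rename (Sum.map (σ : Fin (r + 1) → Fin (r + 1)) id) p = p) ∧
  (∀ τ : Equiv.Perm (Fin (s + 1)),
      MvPolynomial.rename (Sum.map id (τ : Fin (s + 1) → Fin (s + 1))) p = p) ∧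
  (∀ t t' : ℂ, cancelSub r s t p = cancelSub r s t' p)

/-- The `k`-th power sum supersymmetric polynomial
`p_k = x_1^k + ⋯ + x_{r+1}^k + (−1)^{k+1} (y_1^k + ⋯ + y_{s+1}^k)`. -/
noncomputable def powerSumSupersym (r s : ℕ) (k : ℕ) :
    MvPolynomial (Fin (r + 1) ⊕ Fin (s + 1)) ℂ :=
  (∑ i : Fin (r + 1), MvPolynomial.X (Sum.inl i) ^ k) +
    (-1 : MvPolynomial (Fin (r + 1) ⊕ Fin (s + 1)) ℂ) ^ (k + 1) *
      ∑ j : Fin (s + 1), MvPolynomial.X (Sum.inr j) ^ k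

open Finset

section

open Polynomial

theorem Multiset.sum_map_eval_eq_of_sum_map_pow_eq {R : Type*} [CommSemiring R]
    {M N : Multiset R} (h : ∀ k : ℕ, (M.map (· ^ k)).sum = (N.map (· ^ k)).sum) (f : R[X]) :
    (M.map f.eval).sum = (N.map f.eval).sum := by
  induction f using Polynomial.induction_on' with
  | add p q hp hq => simp only [eval_add, Multiset.sum_map_add, hp, hq]
  | monomial n c => simp only [eval_monomial, Multiset.sum_map_mul_left, h n]

theorem Multiset.eq_of_sum_map_pow_eq {R : Type*} [CommRing R] [IsDomain R] [CharZero R]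
    {M N : Multiset R} (h : ∀ k : ℕ, (M.map (· ^ k)).sum = (N.map (· ^ k)).sum) : M = N := by
  classical
  ext x
  set f : R[X] := ∏ z ∈ (M + N).toFinset.erase x, (X - C z)
  have hf : ∀ z ≠ x, z ∈ M + N → f.eval z = 0 := fun z hzx hz => by
    rw [eval_prod]
    exact Finset.prod_eq_zero (mem_erase.2 ⟨hzx, Multiset.mem_toFinset.2 hz⟩) (by simp)
  have hfx : f.eval x ≠ 0 := by
    rw [eval_prod, prod_ne_zero_iff]
    intro z hz
    simpa [sub_eq_zero] using (ne_of_mem_erase hz).symm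
  have hcount : ∀ P ≤ M + N, (P.map f.eval).sum = P.count x * f.eval x := fun P hP => by
    rw [Multiset.sum_map_eq_nsmul_single x fun z hzx hzP => hf z hzx (Multiset.mem_of_le hP hzP),
      nsmul_eq_mul]
  have := Multiset.sum_map_eval_eq_of_sum_map_pow_eq h f
  rw [hcount M (Multiset.le_add_right M N), hcount N (Multiset.le_add_left N M)] at this
  exact_mod_cast mul_right_cancel₀ hfx this

theorem Multiset.reflect_prod_X_add_C {R : Type*} [CommSemiring R] (M : Multiset R) :
    (M.map fun x => X + C x).prod.reflect (Multiset.card M) =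
      (M.map fun x => 1 + C x * X).prod := by
  induction M using Multiset.induction_on with
  | empty => simp
  | cons m M ih =>
    have hdeg : ∀ x : R, (X + C x).natDegree ≤ 1 := fun x =>
      (natDegree_add_le _ _).trans (by simp [natDegree_X_le])
    have hM : (M.map fun x => X + C x).prod.natDegree ≤ Multiset.card M := by
      refine (natDegree_multiset_prod_le _).trans
        ((Multiset.sum_le_card_nsmul _ 1 ?_).trans (by simp))
      simp only [Multiset.map_map, Function.comp_apply, Multiset.mem_map]
      rintro _ ⟨x, -, rfl⟩
      exact hdeg x
    rw [Multiset.map_cons, Multiset.prod_cons, Multiset.card_cons, add_comm,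
      reflect_mul _ _ (hdeg m) hM, ih, Multiset.map_cons, Multiset.prod_cons]
    simp [reflect_add, reflect_C]

theorem Multiset.eq_of_prod_one_add_C_mul_X_eq {R : Type*} [CommRing R] [IsDomain R]
    {M N : Multiset R} (hcard : Multiset.card M = Multiset.card N)
    (h : (M.map fun x => 1 + C x * X).prod = (N.map fun x => 1 + C x * X).prod) : M = N := by
  have hX : (M.map fun x => X + C x).prod = (N.map fun x => X + C x).prod := by
    rw [← reflect_reflect (N := Multiset.card M) (p := (M.map _).prod),
      Multiset.reflect_prod_X_add_C, h, hcard, ← Multiset.reflect_prod_X_add_C, reflect_reflect]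
  have hroots : ∀ P : Multiset R, (P.map fun x => X + C x).prod.roots = P.map Neg.neg :=
    fun P => by simpa [Multiset.map_map, Function.comp_def, sub_eq_add_neg] using
      roots_multiset_prod_X_sub_C (P.map Neg.neg)
  exact Multiset.map_injective neg_injective (by simpa [hroots] using congrArg roots hX)

theorem RatFunc.prod_one_add_C_mul_X {K ι : Type*} [Field K] (s : Finset ι) (f : ι → K) :
    ∏ i ∈ s, (1 + RatFunc.C (f i) * RatFunc.X) =
      algebraMap K[X] (RatFunc K)
        ((s.val.map f).map fun x => 1 + Polynomial.C x * Polynomial.X).prod := by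
  simp [Multiset.map_map, map_prod]

theorem RatFunc.prod_one_sub_C_mul_X {K ι : Type*} [Field K] (s : Finset ι) (f : ι → K) :
    ∏ i ∈ s, (1 - RatFunc.C (f i) * RatFunc.X) =
      algebraMap K[X] (RatFunc K)
        ((s.val.map (-f)).map fun x => 1 + Polynomial.C x * Polynomial.X).prod := by
  simp [sub_eq_add_neg]

theorem ratFunc_prod_div_prod_eq_iff {K ι κ : Type*} [Field K] [Fintype ι] [Fintype κ]
    (a c : ι → K) (b d : κ → K) :
    (∏ i, (1 + RatFunc.C (a i) * RatFunc.X)) / (∏ j, (1 - RatFunc.C (b j) * RatFunc.X)) =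
        (∏ i, (1 + RatFunc.C (c i) * RatFunc.X)) / (∏ j, (1 - RatFunc.C (d j) * RatFunc.X)) ↔
      univ.val.map a + univ.val.map (-d) = univ.val.map c + univ.val.map (-b) := by
  have hP0 : ∀ M : Multiset K, algebraMap K[X] (RatFunc K) (M.map fun x => 1 + C x * X).prod ≠ 0 :=
    fun M => by
      refine RatFunc.algebraMap_ne_zero (Multiset.prod_ne_zero ?_)
      simp only [Multiset.mem_map, not_exists, not_and]
      intro x _ hx
      simpa using congrArg (eval 0) hx
  simp only [RatFunc.prod_one_add_C_mul_X, RatFunc.prod_one_sub_C_mul_X]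
  rw [div_eq_div_iff (hP0 _) (hP0 _), ← map_mul, ← map_mul,
    (IsFractionRing.injective K[X] (RatFunc K)).eq_iff, ← Multiset.prod_add, ← Multiset.prod_add,
    ← Multiset.map_add, ← Multiset.map_add]
  exact ⟨Multiset.eq_of_prod_one_add_C_mul_X_eq (by simp), fun h => by rw [h]⟩

end

open MvPolynomial

theorem Equiv.Perm.exists_comp_eq_of_map_univ_eq {ι α : Type*} [Fintype ι] [DecidableEq α]
    {f g : ι → α} (h : univ.val.map f = univ.val.map g) : ∃ σ : Equiv.Perm ι, g ∘ σ = f := by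
  have hfiber : ∀ v, Fintype.card {i // f i = v} = Fintype.card {i // g i = v} := fun v => by
    simpa [Fintype.card_subtype, Multiset.count_map, Finset.card_def, Finset.filter_val, eq_comm]
      using congrArg (Multiset.count v) h
  exact ⟨Equiv.ofFiberEquiv fun v => Fintype.equivOfCardEq (hfiber v),
    funext (Equiv.ofFiberEquiv_map _)⟩

theorem Multiset.cons_map_update_univ {ι α : Type*} [Fintype ι] [DecidableEq ι] (f : ι → α)
    (i : ι) (y : α) : f i ::ₘ univ.val.map (Function.update f i y) = y ::ₘ univ.val.map f := by
  rw [← Multiset.cons_erase (mem_univ_val i), Multiset.map_cons, Multiset.map_cons,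
    Function.update_self, Multiset.cons_swap]
  congr 2
  exact Multiset.map_congr rfl fun j hj =>
    Function.update_of_ne ((Multiset.Nodup.mem_erase_iff univ.nodup).1 hj).1 _ _

theorem Multiset.card_sub_lt_of_cons_eq_cons {α : Type*} [DecidableEq α] {A A' C : Multiset α}
    {x y : α} (hx : x ∈ A - C) (hy : y ∈ C - A) (h : x ::ₘ A' = y ::ₘ A) :
    Multiset.card (A' - C) < Multiset.card (A - C) := by
  suffices A' - C = (A - C).erase x by rw [this]; exact Multiset.card_erase_lt_of_mem hx
  rw [← Multiset.count_pos, Multiset.count_sub] at hx hy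
  have hxy : x ≠ y := by rintro rfl; omega
  ext z
  have hz := congrArg (Multiset.count z) h
  rw [Multiset.count_sub]
  rcases eq_or_ne z x with rfl | hzx
  · simp only [Multiset.count_cons_self, Multiset.count_cons_of_ne hxy] at hz
    rw [Multiset.count_erase_self, Multiset.count_sub]
    omega
  · rw [Multiset.count_erase_of_ne hzx, Multiset.count_sub]
    rcases eq_or_ne z y with rfl | hzy
    · simp only [Multiset.count_cons_self, Multiset.count_cons_of_ne hzx] at hz
      omega
    · simp only [Multiset.count_cons_of_ne hzx, Multiset.count_cons_of_ne hzy] at hz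
      omega

theorem eval_cancelSub {r s : ℕ} (t : ℂ) (a : Fin (r + 1) → ℂ) (b : Fin (s + 1) → ℂ)
    (p : MvPolynomial (Fin (r + 1) ⊕ Fin (s + 1)) ℂ) :
    eval (Sum.elim a b) (cancelSub r s t p) =
      eval (Sum.elim (Function.update a (Fin.last r) t) (Function.update b 0 (-t))) p := by
  rw [cancelSub, aeval_def, algebraMap_eq, ← eval_assoc]
  refine congrArg (fun v => eval v p) (funext fun i => ?_)
  rcases i with i | j
  · by_cases hi : i = Fin.last r <;> simp [hi]
  · by_cases hj : j = 0 <;> simp [hj]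

theorem eval_powerSumSupersym (r s k : ℕ) (a : Fin (r + 1) → ℂ) (b : Fin (s + 1) → ℂ) :
    eval (Sum.elim a b) (powerSumSupersym r s k) =
      ((univ.val.map a).map (· ^ k)).sum - ((univ.val.map (-b)).map (· ^ k)).sum := by
  simp only [powerSumSupersym, map_add, map_mul, map_pow, map_neg, map_one, map_sum, eval_X,
    Sum.elim_inl, Sum.elim_inr, Multiset.map_map, Function.comp_def, Pi.neg_apply,
    ← Finset.sum_eq_multiset_sum, neg_pow (b _)]
  rw [← Finset.mul_sum]
  ring

theorem cancelSub_eq_cancelSub_iff {r s : ℕ} {p : MvPolynomial (Fin (r + 1) ⊕ Fin (s + 1)) ℂ}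
    {t t' : ℂ} : cancelSub r s t p = cancelSub r s t' p ↔
      ∀ a b, eval (Sum.elim (Function.update a (Fin.last r) t) (Function.update b 0 (-t))) p =
        eval (Sum.elim (Function.update a (Fin.last r) t') (Function.update b 0 (-t'))) p := by
  rw [MvPolynomial.funext_iff]
  refine ⟨fun h a b => by simpa only [eval_cancelSub] using h (Sum.elim a b), fun h x => ?_⟩
  rw [← Sum.elim_comp_inl_inr x, eval_cancelSub, eval_cancelSub]
  exact h _ _

theorem isSupersymmetric_powerSumSupersym (r s k : ℕ) :
    IsSupersymmetric r s (powerSumSupersym r s k) := by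
  refine ⟨fun σ => ?_, fun τ => ?_, fun t t' => cancelSub_eq_cancelSub_iff.2 fun a b => ?_⟩
  · simp [powerSumSupersym, Equiv.sum_comp σ fun i => X (Sum.inl i) ^ k]
  · simp [powerSumSupersym, Equiv.sum_comp τ fun j => X (Sum.inr j) ^ k]
  · have key : ∀ u,
        eval (Sum.elim (Function.update a (Fin.last r) u) (Function.update b 0 (-u)))
          (powerSumSupersym r s k) = ((univ.val.map a).map (· ^ k)).sum - a (Fin.last r) ^ k -
            (((univ.val.map (-b)).map (· ^ k)).sum - (-b) 0 ^ k) := fun u => by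
      have ha := congrArg (fun M => (M.map (· ^ k)).sum)
        (Multiset.cons_map_update_univ a (Fin.last r) u)
      have hb := congrArg (fun M => (M.map (· ^ k)).sum)
        (Multiset.cons_map_update_univ (-b) 0 u)
      simp only [Multiset.map_cons, Multiset.sum_cons] at ha hb
      rw [eval_powerSumSupersym, ← Function.update_neg, neg_neg]
      linear_combination ha - hb
    rw [key, key]

namespace IsSupersymmetric

variable {r s : ℕ} {p : MvPolynomial (Fin (r + 1) ⊕ Fin (s + 1)) ℂ}

theorem eval_comp_perm (hp : IsSupersymmetric r s p) (a : Fin (r + 1) → ℂ)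
    (b : Fin (s + 1) → ℂ) (σ : Equiv.Perm (Fin (r + 1))) (τ : Equiv.Perm (Fin (s + 1))) :
    eval (Sum.elim (a ∘ σ) (b ∘ τ)) p = eval (Sum.elim a b) p := by
  conv_rhs => rw [← hp.1 σ, ← hp.2.1 τ, eval_rename, eval_rename]
  simp [Sum.elim_comp_map]

theorem eval_eq_of_map_univ_eq (hp : IsSupersymmetric r s p) {a c : Fin (r + 1) → ℂ}
    {b d : Fin (s + 1) → ℂ} (hac : univ.val.map a = univ.val.map c)
    (hbd : univ.val.map b = univ.val.map d) : eval (Sum.elim a b) p = eval (Sum.elim c d) p := by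
  obtain ⟨σ, rfl⟩ := Equiv.Perm.exists_comp_eq_of_map_univ_eq hac
  obtain ⟨τ, rfl⟩ := Equiv.Perm.exists_comp_eq_of_map_univ_eq hbd
  exact hp.eval_comp_perm c d σ τ

theorem eval_update_update (hp : IsSupersymmetric r s p) (a : Fin (r + 1) → ℂ)
    (b : Fin (s + 1) → ℂ) (i : Fin (r + 1)) (j : Fin (s + 1)) (t t' : ℂ) :
    eval (Sum.elim (Function.update a i t) (Function.update b j (-t))) p =
      eval (Sum.elim (Function.update a i t') (Function.update b j (-t'))) p := by
  have key : ∀ u, eval (Sum.elim (Function.update a i u) (Function.update b j (-u))) p =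
      eval (Sum.elim (a ∘ Equiv.swap i (Fin.last r)) (b ∘ Equiv.swap j 0)) (cancelSub r s u p) :=
    fun u => by
      rw [eval_cancelSub, ← hp.eval_comp_perm _ _ (Equiv.swap i (Fin.last r)) (Equiv.swap j 0),
        Function.update_comp_equiv, Function.update_comp_equiv, Equiv.symm_swap, Equiv.symm_swap,
        Equiv.swap_apply_left, Equiv.swap_apply_left]
  rw [key, key, hp.2.2 t t']

theorem eval_eq_of_add_eq (hp : IsSupersymmetric r s p) {a c : Fin (r + 1) → ℂ}
    {b d : Fin (s + 1) → ℂ}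
    (h : univ.val.map a + univ.val.map (-d) = univ.val.map c + univ.val.map (-b)) :
    eval (Sum.elim a b) p = eval (Sum.elim c d) p := by
  classical
  induction hn : Multiset.card (univ.val.map a - univ.val.map c) using Nat.strong_induction_on
    generalizing a b with
  | _ n ih =>
    by_cases hac : univ.val.map a = univ.val.map c
    · rw [hac, add_right_inj] at h
      refine hp.eval_eq_of_map_univ_eq hac (Multiset.map_injective neg_injective ?_)
      simpa [Multiset.map_map, Function.comp_def] using h.symm
    have hcard : Multiset.card (univ.val.map a) = Multiset.card (univ.val.map c) := by simp
    obtain ⟨x, hx⟩ : ∃ x, x ∈ univ.val.map a - univ.val.map c :=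
      Multiset.exists_mem_of_ne_zero fun h0 =>
        hac (Multiset.eq_of_le_of_card_le (tsub_eq_zero_iff_le.1 h0) hcard.ge)
    obtain ⟨y, hy⟩ : ∃ y, y ∈ univ.val.map c - univ.val.map a :=
      Multiset.exists_mem_of_ne_zero fun h0 =>
        hac (Multiset.eq_of_le_of_card_le (tsub_eq_zero_iff_le.1 h0) hcard.le).symm
    have hxb : x ∈ univ.val.map (-b) := by
      refine Multiset.mem_of_le ?_ hx
      calc univ.val.map a - univ.val.map c
          ≤ univ.val.map a + univ.val.map (-d) - univ.val.map c := tsub_le_tsub_right le_self_add _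
        _ = univ.val.map (-b) := by rw [h, add_tsub_cancel_left]
    obtain ⟨i, -, rfl⟩ := Multiset.mem_map.1 (Multiset.mem_of_le (Multiset.sub_le_self _ _) hx)
    obtain ⟨j, -, hj⟩ := Multiset.mem_map.1 hxb
    have hbj : -a i = b j := by rw [← hj, Pi.neg_apply, neg_neg]
    -- Trade the cancelling pair `(a i, b j)` for `(y, -y)`, shrinking the surplus of `a` over `c`.
    have hmove := hp.eval_update_update a b i j (a i) y
    rw [Function.update_eq_self, hbj, Function.update_eq_self] at hmove
    rw [hmove]
    have hA := Multiset.cons_map_update_univ a i y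
    have hB : a i ::ₘ univ.val.map (-Function.update b j (-y)) = y ::ₘ univ.val.map (-b) := by
      rw [← Function.update_neg, neg_neg, ← hj]
      exact Multiset.cons_map_update_univ (-b) j y
    refine ih _ (hn ▸ Multiset.card_sub_lt_of_cons_eq_cons hx hy hA) ?_ rfl
    apply (Multiset.cons_inj_right (a i)).1
    rw [← Multiset.cons_add, hA, Multiset.cons_add, h, ← Multiset.add_cons, ← hB,
      Multiset.add_cons]

end IsSupersymmetric

/-- Every supersymmetric polynomial takes the same value on the two tuples
`(a, b)` and `(c, d)` iff the rational functions
`∏ (1 + a_i z) / ∏ (1 − b_j z)` and `∏ (1 + c_i z) / ∏ (1 − d_j z)` coincide. -/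
theorem supersym_values_eq_iff_ratFunc_eq (r s : ℕ)
    (a c : Fin (r + 1) → ℂ) (b d : Fin (s + 1) → ℂ) :
    (∀ p : MvPolynomial (Fin (r + 1) ⊕ Fin (s + 1)) ℂ, IsSupersymmetric r s p →
        MvPolynomial.eval (Sum.elim a b) p = MvPolynomial.eval (Sum.elim c d) p) ↔
      (∏ i : Fin (r + 1), (1 + RatFunc.C (a i) * RatFunc.X)) /
          (∏ j : Fin (s + 1), (1 - RatFunc.C (b j) * RatFunc.X)) =
        (∏ i : Fin (r + 1), (1 + RatFunc.C (c i) * RatFunc.X)) /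
          (∏ j : Fin (s + 1), (1 - RatFunc.C (d j) * RatFunc.X)) := by
  rw [ratFunc_prod_div_prod_eq_iff]
  refine ⟨fun h => Multiset.eq_of_sum_map_pow_eq fun k => ?_,
    fun h p hp => hp.eval_eq_of_add_eq h⟩
  have hk := h _ (isSupersymmetric_powerSumSupersym r s k)
  rw [eval_powerSumSupersym, eval_powerSumSupersym] at hk
  simp only [Multiset.map_add, Multiset.sum_add]
  linear_combination hk
end

section
/- Let S be a ℂ-subalgebra of ℂ[X_1,...,X_m] and let v_1,...,v_n ∈ ℂ^m be points such that for each pair i ≠ j there exists p ∈ S with p(v_i) ≠ p(v_j). Then there exist p_1,...,p_n ∈ S such that the n×n matrix with entries p_i(v_j) is nonsingular. -/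
/-- If `S` is a `ℂ`-subalgebra of `ℂ[X_1,…,X_m]` and `v_1,…,v_n ∈ ℂ^m` are points separated
by `S` (for each `i ≠ j` some `p ∈ S` takes different values at `v_i` and `v_j`), then there
are `p_1,…,p_n ∈ S` such that the matrix `(p_i(v_j))` is nonsingular. -/
theorem exists_nonsingular_evaluation_matrix (m n : ℕ)
    (S : Subalgebra ℂ (MvPolynomial (Fin m) ℂ)) (v : Fin n → Fin m → ℂ)
    (hsep : ∀ i j : Fin n, i ≠ j →
      ∃ p ∈ S, MvPolynomial.eval (v i) p ≠ MvPolynomial.eval (v j) p) :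
    ∃ p : Fin n → MvPolynomial (Fin m) ℂ, (∀ i, p i ∈ S) ∧
      (Matrix.of fun i j : Fin n => MvPolynomial.eval (v j) (p i)).det ≠ 0 := by
  classical
  have key : ∀ k : Fin n, ∃ p ∈ S, ∀ l : Fin n,
      MvPolynomial.eval (v l) p = if l = k then 1 else 0 := by
    intro k
    have hstep : ∀ j ∈ Finset.univ.erase k, ∃ q ∈ S,
        MvPolynomial.eval (v k) q = 1 ∧ MvPolynomial.eval (v j) q = 0 := by
      intro j hj
      have hjk : j ≠ k := (Finset.mem_erase.mp hj).1
      obtain ⟨p, hpS, hpne⟩ := hsep k j hjk.symm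
      refine ⟨(MvPolynomial.eval (v k) p - MvPolynomial.eval (v j) p)⁻¹ •
        (p - MvPolynomial.C (MvPolynomial.eval (v j) p)), ?_, ?_, ?_⟩
      · exact S.smul_mem (S.sub_mem hpS (S.algebraMap_mem _)) _
      · have hne : MvPolynomial.eval (v k) p - MvPolynomial.eval (v j) p ≠ 0 :=
          sub_ne_zero.mpr hpne
        simp [MvPolynomial.smul_eval, inv_mul_cancel₀ hne]
      · simp [MvPolynomial.smul_eval]
    choose g hgS hg1 hg0 using hstep
    refine ⟨∏ j ∈ (Finset.univ.erase k).attach, g j.1 j.2, ?_, ?_⟩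
    · exact S.prod_mem fun j _ => hgS j.1 j.2
    · intro l
      rw [map_prod]
      by_cases hl : l = k
      · subst hl
        simp only [if_pos rfl]
        exact Finset.prod_eq_one fun j _ => hg1 j.1 j.2
      · rw [if_neg hl]
        have hlmem : l ∈ Finset.univ.erase k := Finset.mem_erase.mpr ⟨hl, Finset.mem_univ l⟩
        exact Finset.prod_eq_zero (Finset.mem_attach _ ⟨l, hlmem⟩) (hg0 l hlmem)
  choose p hpS hpeval using key
  refine ⟨p, hpS, ?_⟩
  have hM : (Matrix.of fun i j : Fin n => MvPolynomial.eval (v j) (p i)) = 1 := by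
    ext i j
    simp [hpeval i j, Matrix.one_apply, eq_comm]
  rw [hM, Matrix.det_one]
  exact one_ne_zero
end

section
/- Two Young diagrams (partitions) with the same multiset of contents are equal; that is, if for all k ∈ ℤ the number of boxes of content k in [λ] equals the number of boxes of content k in [μ], then λ = μ. -/
lemma downset_eq_range (S : Finset ℕ) (hS : ∀ m n : ℕ, m ≤ n → n ∈ S → m ∈ S) :
    S = Finset.range S.card := by
  have hsub : S ⊆ Finset.range S.card := by
    intro x hx
    simp only [Finset.mem_range]
    have h1 : Finset.Iic x ⊆ S := fun y hy => hS y x (Finset.mem_Iic.mp hy) hx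
    have h2 := Finset.card_le_card h1
    simpa [Nat.card_Iic] using h2
  exact Finset.eq_of_subset_of_card_le hsub (by simp)

lemma youngDiagram_mem_iff_diag_card (μ : YoungDiagram) (a b : ℕ) :
    (a, b) ∈ μ ↔ min a b <
      (μ.cells.filter fun c => (c.2 : ℤ) - (c.1 : ℤ) = (b : ℤ) - (a : ℤ)).card := by
  classical
  set T := μ.cells.filter (fun c : ℕ × ℕ => (c.2 : ℤ) - (c.1 : ℤ) = (b : ℤ) - (a : ℤ)) with hT
  have hchar : ∀ c ∈ T, c.1 = (a - min a b) + min c.1 c.2 ∧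
      c.2 = (b - min a b) + min c.1 c.2 := by
    intro c hc
    rw [hT, Finset.mem_filter] at hc
    omega
  set S := T.image (fun c : ℕ × ℕ => min c.1 c.2) with hS
  have hcard : S.card = T.card := by
    apply Finset.card_image_of_injOn
    intro c1 h1 c2 h2 he
    have he' : min c1.1 c1.2 = min c2.1 c2.2 := he
    obtain ⟨e1, e2⟩ := hchar c1 h1
    obtain ⟨f1, f2⟩ := hchar c2 h2
    have : c1.1 = c2.1 ∧ c1.2 = c2.2 := by constructor <;> omega
    exact Prod.ext this.1 this.2
  have hdc : ∀ m n : ℕ, m ≤ n → n ∈ S → m ∈ S := by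
    intro m n hmn hn
    rw [hS, Finset.mem_image] at hn
    obtain ⟨c, hc, hcm⟩ := hn
    obtain ⟨h1, h2⟩ := hchar c hc
    rw [hT, Finset.mem_filter, YoungDiagram.mem_cells] at hc
    have hmem : (a - min a b + m, b - min a b + m) ∈ μ := by
      apply μ.up_left_mem (i2 := c.1) (j2 := c.2) (by omega) (by omega)
      exact hc.1
    rw [hS, Finset.mem_image]
    refine ⟨(a - min a b + m, b - min a b + m), ?_, by simp; omega⟩
    rw [hT, Finset.mem_filter, YoungDiagram.mem_cells]
    exact ⟨hmem, by push_cast; omega⟩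
  have hrange : S = Finset.range T.card := by
    rw [← hcard]; exact downset_eq_range S hdc
  constructor
  · intro hab
    have hT' : (a, b) ∈ T := by
      rw [hT, Finset.mem_filter, YoungDiagram.mem_cells]; exact ⟨hab, rfl⟩
    have : min a b ∈ S := Finset.mem_image_of_mem _ hT'
    rw [hrange, Finset.mem_range] at this
    exact this
  · intro hlt
    have : min a b ∈ S := by rw [hrange, Finset.mem_range]; exact hlt
    rw [hS, Finset.mem_image] at this
    obtain ⟨c, hc, hcm⟩ := this
    obtain ⟨h1, h2⟩ := hchar c hc
    rw [hT, Finset.mem_filter, YoungDiagram.mem_cells] at hc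
    have : (a, b) = c := Prod.ext (by omega) (by omega)
    rw [this]; exact hc.1

/-- Two Young diagrams with the same multiset of contents are equal: if for all `k ∈ ℤ` the
number of boxes of content `k` (the content of the cell in row `a`, column `b` being `b − a`)
in `μ` equals that in `ν`, then `μ = ν`. -/
theorem youngDiagram_eq_of_contents_eq (μ ν : YoungDiagram)
    (h : ∀ k : ℤ,
      (μ.cells.filter fun c => (c.2 : ℤ) - (c.1 : ℤ) = k).card =
        (ν.cells.filter fun c => (c.2 : ℤ) - (c.1 : ℤ) = k).card) :
    μ = ν := by
  have key : ∀ x : ℕ × ℕ, x ∈ μ ↔ x ∈ ν := by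
    rintro ⟨a, b⟩
    rw [youngDiagram_mem_iff_diag_card μ a b, youngDiagram_mem_iff_diag_card ν a b,
      h ((b : ℤ) - (a : ℤ))]
  apply YoungDiagram.ext
  ext x
  rw [YoungDiagram.mem_cells, YoungDiagram.mem_cells]
  exact key x
end

section
/- Let λ^L, λ^R, μ^L, μ^R be partitions with |λ^L| = r − t, |λ^R| = s − t, |μ^L| = r − t', |μ^R| = s − t' for some 0 ≤ t, t' ≤ min(r,s), and let δ ∈ ℂ with δ ∉ ℤ. If ∏_{u∈[λ^L]} (1 + c(u) z) / ∏_{u∈[λ^R]} (1 − (c(u)+δ) z) = ∏_{u∈[μ^L]} (1 + c(u) z) / ∏_{u∈[μ^R]} (1 − (c(u)+δ) z) as rational functions in z, then t = t', λ^L = μ^L, and λ^R = μ^R. -/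
open Polynomial

namespace YDaux

noncomputable def contM (l : YoungDiagram) : Multiset ℤ :=
  l.cells.val.map (fun u => (u.2 : ℤ) - (u.1 : ℤ))

lemma card_contM (l : YoungDiagram) : Multiset.card (contM l) = l.cells.card := by
  rw [contM, Multiset.card_map, Finset.card_def]

lemma mem_iff_lt_card (S : Finset ℕ) (hS : ∀ k ∈ S, ∀ k' < k, k' ∈ S) (n : ℕ) :
    n ∈ S ↔ n < S.card := by
  constructor
  · intro hn
    have hsub : Finset.range (n+1) ⊆ S := by
      intro k hk
      simp only [Finset.mem_range, Nat.lt_succ_iff] at hk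
      rcases hk.lt_or_eq with h | h
      · exact hS n hn k h
      · exact h ▸ hn
    have := Finset.card_le_card hsub
    simpa using this
  · intro hn
    by_contra h
    have hsub : S ⊆ Finset.range n := by
      intro m hm
      simp only [Finset.mem_range]
      by_contra hmn
      push_neg at hmn
      rcases hmn.lt_or_eq with h' | h'
      · exact h (hS m hm n h')
      · exact h (h' ▸ hm)
    have := Finset.card_le_card hsub
    simp only [Finset.card_range] at this
    omega

lemma mem_iff_lt_count (l : YoungDiagram) (i j : ℕ) :
    (i, j) ∈ l ↔ min i j < Multiset.count ((j : ℤ) - (i : ℤ)) (contM l) := by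
  classical
  set c : ℤ := (j : ℤ) - (i : ℤ) with hc
  set F : Finset (ℕ × ℕ) := l.cells.filter (fun u => c = (u.2 : ℤ) - (u.1 : ℤ)) with hF
  have hcount : Multiset.count c (contM l) = F.card := by
    rw [contM, Multiset.count_map, hF, Finset.card_def, Finset.filter_val]
  set S : Finset ℕ := F.image (fun u => min u.1 u.2) with hS
  have hcardS : S.card = F.card := by
    rw [hS]
    apply Finset.card_image_of_injOn
    rintro ⟨a, b⟩ ha ⟨a', b'⟩ hb hmin
    simp only [hF, Finset.mem_coe, Finset.mem_filter] at ha hb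
    have h1 := ha.2
    have h2 := hb.2
    have hmin' : min a b = min a' b' := hmin
    simp only [Prod.mk.injEq]
    constructor <;> omega
  have hdc : ∀ k ∈ S, ∀ k' < k, k' ∈ S := by
    rintro k hk k' hk'
    rw [hS, Finset.mem_image] at hk
    obtain ⟨⟨a, b⟩, ha, hab⟩ := hk
    rw [hF, Finset.mem_filter] at ha
    rw [hS, Finset.mem_image]
    have hab' : min a b = k := hab
    have h2 : c = (b : ℤ) - (a : ℤ) := ha.2
    refine ⟨(a - (k - k'), b - (k - k')), ?_, ?_⟩
    · rw [hF, Finset.mem_filter]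
      constructor
      · rw [YoungDiagram.mem_cells]
        exact l.up_left_mem (by omega) (by omega) ((YoungDiagram.mem_cells _).mp ha.1)
      · show c = _ - _
        omega
    · show min _ _ = k'
      omega
  have hmemS : (i, j) ∈ l ↔ min i j ∈ S := by
    constructor
    · intro h
      rw [hS, Finset.mem_image]
      exact ⟨(i, j), by rw [hF, Finset.mem_filter]; exact ⟨(YoungDiagram.mem_cells _).mpr h, rfl⟩, rfl⟩
    · intro h
      rw [hS, Finset.mem_image] at h
      obtain ⟨⟨a, b⟩, ha, hab⟩ := h
      rw [hF, Finset.mem_filter] at ha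
      have h2 : c = (b : ℤ) - (a : ℤ) := ha.2
      have hab' : min a b = min i j := hab
      have : a = i ∧ b = j := by omega
      obtain ⟨rfl, rfl⟩ := this
      exact (YoungDiagram.mem_cells _).mp ha.1
  rw [hmemS, hcount, ← hcardS]
  exact mem_iff_lt_card S hdc (min i j)


lemma eq_of_contM_count (l m : YoungDiagram)
    (h : ∀ c : ℤ, Multiset.count c (contM l) = Multiset.count c (contM m)) : l = m := by
  apply YoungDiagram.ext
  ext ⟨i, j⟩
  rw [YoungDiagram.mem_cells, YoungDiagram.mem_cells, mem_iff_lt_count, mem_iff_lt_count, h]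

lemma one_add_ne (a : ℂ) : (1 : ℂ[X]) + C a * X ≠ 0 := fun h => by
  simpa using congrArg (eval 0) h

lemma one_sub_ne (a : ℂ) : (1 : ℂ[X]) - C a * X ≠ 0 := fun h => by
  simpa using congrArg (eval 0) h

lemma roots_one_sub (a : ℂ) (ha : a ≠ 0) : ((1 : ℂ[X]) - C a * X).roots = {a⁻¹} := by
  have h : (1 : ℂ[X]) - C a * X = C (-a) * (X - C a⁻¹) := by
    have h2 : (-a) * a⁻¹ = -1 := by field_simp
    rw [mul_sub, ← C_mul, h2]
    simp only [map_neg, map_one]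
    ring
  rw [h, roots_C_mul _ (neg_ne_zero.2 ha), roots_X_sub_C]

lemma roots_one_add (a : ℂ) (ha : a ≠ 0) : ((1 : ℂ[X]) + C a * X).roots = {-a⁻¹} := by
  have h : (1 : ℂ[X]) + C a * X = C a * (X - C (-a⁻¹)) := by
    have h2 : a * -a⁻¹ = -1 := by field_simp
    rw [mul_sub, ← C_mul, h2]
    simp only [map_neg, map_one]
    ring
  rw [h, roots_C_mul _ ha, roots_X_sub_C]

lemma bind_filter_map (m : Multiset ℤ) (g : ℤ → ℂ) :
    (m.bind fun c => if c = 0 then 0 else {g c}) =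
      (m.filter (fun c => ¬ c = 0)).map g := by
  classical
  induction m using Multiset.induction with
  | empty => simp
  | cons a s ih => by_cases h : a = 0 <;> simp [h, ih]

lemma roots_P (l : YoungDiagram) :
    (∏ u ∈ l.cells, ((1 : ℂ[X]) + C (((u.2 : ℤ) - (u.1 : ℤ) : ℤ) : ℂ) * X)).roots =
      ((contM l).filter (fun c => ¬ c = 0)).map (fun c : ℤ => -((c : ℂ))⁻¹) := by
  classical
  rw [roots_prod _ _ (Finset.prod_ne_zero_iff.mpr fun u _ => one_add_ne _)]
  have hb : (l.cells.val.bind fun u => ((1 : ℂ[X]) + C (((u.2 : ℤ) - (u.1 : ℤ) : ℤ) : ℂ) * X).roots)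
      = l.cells.val.bind (fun u => if ((u.2 : ℤ) - (u.1 : ℤ)) = 0 then 0
          else {-((((u.2 : ℤ) - (u.1 : ℤ) : ℤ) : ℂ))⁻¹}) := by
    refine Multiset.bind_congr fun u _ => ?_
    by_cases h : ((u.2 : ℤ) - (u.1 : ℤ)) = 0
    · simp [h]
    · rw [if_neg h, roots_one_add _ (by exact_mod_cast h)]
  rw [hb, contM, ← bind_filter_map, Multiset.bind_map]

lemma roots_Q (l : YoungDiagram) (δ : ℂ) (hδ0 : ∀ c : ℤ, ((c : ℂ) + δ) ≠ 0) :
    (∏ u ∈ l.cells, ((1 : ℂ[X]) - C ((((u.2 : ℤ) - (u.1 : ℤ) : ℤ) : ℂ) + δ) * X)).roots =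
      (contM l).map (fun c : ℤ => ((c : ℂ) + δ)⁻¹) := by
  rw [roots_prod _ _ (Finset.prod_ne_zero_iff.mpr fun u _ => one_sub_ne _)]
  have hb : (l.cells.val.bind fun u =>
        ((1 : ℂ[X]) - C ((((u.2 : ℤ) - (u.1 : ℤ) : ℤ) : ℂ) + δ) * X).roots)
      = l.cells.val.bind (fun u => {(((((u.2 : ℤ) - (u.1 : ℤ) : ℤ) : ℂ)) + δ)⁻¹}) :=
    Multiset.bind_congr fun u _ => roots_one_sub _ (hδ0 _)
  rw [hb, Multiset.bind_singleton, contM, Multiset.map_map]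
  rfl

end YDaux



/-- Let `λᴸ, λᴿ, μᴸ, μᴿ` be partitions (Young diagrams) with `|λᴸ| = r − t`, `|λᴿ| = s − t`,
`|μᴸ| = r − t'`, `|μᴿ| = s − t'` for some `0 ≤ t, t' ≤ min(r,s)`, and let `δ ∈ ℂ` be
a non-integer. If the rational functions
`∏_{u∈[λᴸ]} (1 + c(u) z) / ∏_{u∈[λᴿ]} (1 − (c(u)+δ) z)` for `λ` and `μ` coincide,
then `t = t'`, `λᴸ = μᴸ` and `λᴿ = μᴿ`. (The content of the cell in row `a`, column `b`
is `b − a`.) -/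
theorem youngDiagram_pairs_eq_of_ratFunc_eq_of_nonintegral
    (r s t t' : ℕ) (ht : t ≤ min r s) (ht' : t' ≤ min r s)
    (lL lR mL mR : YoungDiagram)
    (hlL : lL.cells.card = r - t) (hlR : lR.cells.card = s - t)
    (hmL : mL.cells.card = r - t') (hmR : mR.cells.card = s - t')
    (δ : ℂ) (hδ : ∀ n : ℤ, δ ≠ (n : ℂ))
    (heq :
      (∏ c ∈ lL.cells, (1 + RatFunc.C (((c.2 : ℤ) - (c.1 : ℤ) : ℤ) : ℂ) * RatFunc.X)) /
          (∏ c ∈ lR.cells,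
            (1 - RatFunc.C ((((c.2 : ℤ) - (c.1 : ℤ) : ℤ) : ℂ) + δ) * RatFunc.X)) =
        (∏ c ∈ mL.cells, (1 + RatFunc.C (((c.2 : ℤ) - (c.1 : ℤ) : ℤ) : ℂ) * RatFunc.X)) /
          (∏ c ∈ mR.cells,
            (1 - RatFunc.C ((((c.2 : ℤ) - (c.1 : ℤ) : ℤ) : ℂ) + δ) * RatFunc.X))) :
    t = t' ∧ lL = mL ∧ lR = mR := by
  classical
  have hδ0 : ∀ c : ℤ, ((c : ℂ) + δ) ≠ 0 := by
    intro c h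
    exact hδ (-c) (by push_cast; linear_combination h)
  -- Convert the RatFunc products to images of polynomial products
  have hmapP : ∀ l : YoungDiagram,
      (∏ u ∈ l.cells, (1 + RatFunc.C (((u.2 : ℤ) - (u.1 : ℤ) : ℤ) : ℂ) * RatFunc.X)) =
        algebraMap ℂ[X] (RatFunc ℂ)
          (∏ u ∈ l.cells, ((1 : ℂ[X]) + C (((u.2 : ℤ) - (u.1 : ℤ) : ℤ) : ℂ) * X)) := by
    intro l
    rw [map_prod]
    exact Finset.prod_congr rfl fun u _ => by
      rw [map_add, map_one, map_mul, RatFunc.algebraMap_C, RatFunc.algebraMap_X]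
  have hmapQ : ∀ l : YoungDiagram,
      (∏ u ∈ l.cells, (1 - RatFunc.C ((((u.2 : ℤ) - (u.1 : ℤ) : ℤ) : ℂ) + δ) * RatFunc.X)) =
        algebraMap ℂ[X] (RatFunc ℂ)
          (∏ u ∈ l.cells, ((1 : ℂ[X]) - C ((((u.2 : ℤ) - (u.1 : ℤ) : ℤ) : ℂ) + δ) * X)) := by
    intro l
    rw [map_prod]
    exact Finset.prod_congr rfl fun u _ => by
      rw [map_sub, map_one, map_mul, RatFunc.algebraMap_C, RatFunc.algebraMap_X]
  have hPne : ∀ l : YoungDiagram,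
      (∏ u ∈ l.cells, ((1 : ℂ[X]) + C (((u.2 : ℤ) - (u.1 : ℤ) : ℤ) : ℂ) * X)) ≠ 0 :=
    fun l => Finset.prod_ne_zero_iff.mpr fun u _ => YDaux.one_add_ne _
  have hQne : ∀ l : YoungDiagram,
      (∏ u ∈ l.cells, ((1 : ℂ[X]) - C ((((u.2 : ℤ) - (u.1 : ℤ) : ℤ) : ℂ) + δ) * X)) ≠ 0 :=
    fun l => Finset.prod_ne_zero_iff.mpr fun u _ => YDaux.one_sub_ne _
  rw [hmapP lL, hmapP mL, hmapQ lR, hmapQ mR,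
    div_eq_div_iff
      ((map_ne_zero_iff _ (RatFunc.algebraMap_injective ℂ)).mpr (hQne lR))
      ((map_ne_zero_iff _ (RatFunc.algebraMap_injective ℂ)).mpr (hQne mR)),
    ← map_mul, ← map_mul] at heq
  have hpoly := RatFunc.algebraMap_injective ℂ heq
  have hroots := congrArg Polynomial.roots hpoly
  rw [Polynomial.roots_mul (mul_ne_zero (hPne lL) (hQne mR)),
    Polynomial.roots_mul (mul_ne_zero (hPne mL) (hQne lR)),
    YDaux.roots_P lL, YDaux.roots_P mL, YDaux.roots_Q lR δ hδ0, YDaux.roots_Q mR δ hδ0]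
    at hroots
  set fP : ℤ → ℂ := fun c => -((c : ℂ))⁻¹ with hfP
  set fQ : ℤ → ℂ := fun c => ((c : ℂ) + δ)⁻¹ with hfQ
  set p : ℂ → Prop := fun x => ∃ n : ℤ, x = ((n : ℂ) + δ)⁻¹ with hp
  have hfilQ : ∀ l : YoungDiagram,
      Multiset.filter p ((YDaux.contM l).map fQ) = (YDaux.contM l).map fQ := by
    intro l
    rw [Multiset.filter_eq_self]
    intro a ha
    obtain ⟨c, _, rfl⟩ := Multiset.mem_map.mp ha
    exact ⟨c, rfl⟩
  have hfilP : ∀ l : YoungDiagram,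
      Multiset.filter p (((YDaux.contM l).filter (fun c => ¬ c = 0)).map fP) = 0 := by
    intro l
    rw [Multiset.filter_eq_nil]
    intro a ha
    obtain ⟨c, _, rfl⟩ := Multiset.mem_map.mp ha
    rintro ⟨n, hn⟩
    have h1 : ((-c : ℤ) : ℂ)⁻¹ = ((n : ℂ) + δ)⁻¹ := by
      rw [← hn, hfP]; push_cast; rw [inv_neg]
    have h2 : ((-c : ℤ) : ℂ) = (n : ℂ) + δ := inv_injective h1
    exact hδ (-c - n) (by push_cast at h2 ⊢; linear_combination -h2)
  have hBfil := congrArg (Multiset.filter p) hroots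
  rw [Multiset.filter_add, Multiset.filter_add, hfilQ, hfilQ, hfilP, hfilP,
    zero_add, zero_add] at hBfil
  -- injectivity of fQ and fP
  have hinjQ : Function.Injective fQ := by
    intro a b h
    have h2 : ((a : ℂ) + δ) = ((b : ℂ) + δ) := inv_injective h
    have : (a : ℂ) = (b : ℂ) := by linear_combination h2
    exact_mod_cast this
  have hinjP : Function.Injective fP := by
    intro a b h
    rw [hfP] at h
    have h2 : ((a : ℂ))⁻¹ = ((b : ℂ))⁻¹ := by
      have := neg_injective h; simpa using this
    have : (a : ℂ) = (b : ℂ) := inv_injective h2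
    exact_mod_cast this
  have hcontR : YDaux.contM mR = YDaux.contM lR := Multiset.map_injective hinjQ hBfil
  -- cancel to get equality of the "P" parts
  have hA : ((YDaux.contM lL).filter (fun c => ¬ c = 0)).map fP =
      ((YDaux.contM mL).filter (fun c => ¬ c = 0)).map fP := by
    rw [hcontR] at hroots
    exact add_right_cancel hroots
  have hfil : (YDaux.contM lL).filter (fun c => ¬ c = 0) =
      (YDaux.contM mL).filter (fun c => ¬ c = 0) := Multiset.map_injective hinjP hA
  -- t = t'
  have hcardR : Multiset.card (YDaux.contM lR) = s - t := by rw [YDaux.card_contM, hlR]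
  have hcardR' : Multiset.card (YDaux.contM mR) = s - t' := by rw [YDaux.card_contM, hmR]
  have htt : t = t' := by
    rw [hcontR, hcardR] at hcardR'
    omega
  refine ⟨htt, ?_, ?_⟩
  · -- lL = mL
    apply YDaux.eq_of_contM_count
    intro c
    have hcardL : Multiset.card (YDaux.contM lL) = Multiset.card (YDaux.contM mL) := by
      rw [YDaux.card_contM, YDaux.card_contM, hlL, hmL, htt]
    by_cases hc : c = 0
    · subst hc
      have e1 : ∀ m : Multiset ℤ, Multiset.count 0 m +
          Multiset.card (m.filter (fun c => ¬ c = 0)) = Multiset.card m := by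
        intro m
        have h1 := Multiset.filter_add_not (fun c : ℤ => (0 : ℤ) = c) m
        have h2 : Multiset.filter (fun c : ℤ => ¬ (0 : ℤ) = c) m =
            Multiset.filter (fun c : ℤ => ¬ c = 0) m :=
          Multiset.filter_congr fun x _ => by constructor <;> (intro h h'; exact h h'.symm)
        rw [h2] at h1
        calc Multiset.count 0 m + Multiset.card (m.filter (fun c => ¬ c = 0))
            = Multiset.card (Multiset.filter (fun c : ℤ => (0 : ℤ) = c) m) +
              Multiset.card (m.filter (fun c => ¬ c = 0)) := by
              rw [Multiset.count_eq_card_filter_eq]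
          _ = Multiset.card m := by rw [← Multiset.card_add, h1]
      have e2 := e1 (YDaux.contM lL)
      have e3 := e1 (YDaux.contM mL)
      rw [hfil] at e2
      omega
    · have := congrArg (Multiset.count c) hfil
      rwa [Multiset.count_filter, Multiset.count_filter, if_pos hc, if_pos hc] at this
  · -- lR = mR
    exact YDaux.eq_of_contM_count _ _ fun c => by rw [hcontR]
end

section
/- Let λ^L, λ^R, μ^L, μ^R be partitions with |λ^L| = r − t, |λ^R| = s − t, |μ^L| = r − t', |μ^R| = s − t' for some 0 ≤ t, t' ≤ min(r,s), with r, s ≥ 1, and let δ ∈ ℂ with |δ| > r + s − 2. If ∏_{u∈[λ^L]} (1 + c(u) z) / ∏_{u∈[λ^R]} (1 − (c(u)+δ) z) = ∏_{u∈[μ^L]} (1 + c(u) z) / ∏_{u∈[μ^R]} (1 − (c(u)+δ) z) as rational functions in z, then t = t', λ^L = μ^L, and λ^R = μ^R. -/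
/-!
Clearing denominators, the identity becomes an equality of polynomials
`∏ (1 - a X)` over the multisets `-c(λᴸ) + (c(μᴿ) + δ)` and `-c(μᴸ) + (c(λᴿ) + δ)`, and such a
product determines the nonzero part of its multiset (their inverses are its roots). Since
`|δ| > r + s - 2`, every `-c(u)` has norm at most `r - 1` while every `c(u') + δ` has norm larger
than `r - 1`, so the two kinds of entries cannot cancel: the right contents agree, and the left
contents agree away from `0`, hence everywhere because the sizes agree. Finally, a Young diagram
is determined by its multiset of contents: the cells of content `k` form an initial segment of
the diagonal `k`.
-/

namespace Finset

theorem eq_range_card_of_isLowerSet {T : Finset ℕ} (hT : IsLowerSet (T : Set ℕ)) :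
    T = range T.card := by
  obtain hT | ⟨n, hn⟩ := hT.eq_univ_or_Iio
  · exact absurd (hT ▸ T.finite_toSet) Set.infinite_univ
  · have hTn : T = range n := by
      ext m
      rw [← mem_coe, hn, mem_range, Set.mem_Iio]
    rw [hTn, card_range]

end Finset

namespace Multiset

variable {α : Type*}

theorem eq_and_eq_of_add_eq_add_of_forall {p : α → Prop} [DecidablePred p]
    {s₁ s₂ t₁ t₂ : Multiset α} (h : s₁ + t₁ = s₂ + t₂) (hs₁ : ∀ a ∈ s₁, p a)
    (hs₂ : ∀ a ∈ s₂, p a) (ht₁ : ∀ a ∈ t₁, ¬p a) (ht₂ : ∀ a ∈ t₂, ¬p a) :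
    s₁ = s₂ ∧ t₁ = t₂ := by
  have hs : s₁ = s₂ := by
    simpa [filter_add, filter_eq_self.mpr hs₁, filter_eq_self.mpr hs₂, filter_eq_nil.mpr ht₁,
      filter_eq_nil.mpr ht₂] using congrArg (filter p) h
  exact ⟨hs, add_left_cancel (hs ▸ h)⟩

theorem eq_of_filter_ne_eq_of_card_eq [DecidableEq α] {s t : Multiset α} {b : α}
    (hst : s.filter (· ≠ b) = t.filter (· ≠ b)) (hcard : card s = card t) : s = t := by
  have hcount : ∀ u : Multiset α, count b u + card (u.filter (· ≠ b)) = card u := fun u => by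
    rw [← card_replicate (count b u) b, ← filter_eq', ← card_add, filter_add_not]
  ext a
  by_cases hab : a = b
  · subst hab
    have := hcount s
    have := hcount t
    rw [hst] at *
    omega
  · rw [← count_filter_of_pos (p := (· ≠ b)) hab, hst, count_filter_of_pos (p := (· ≠ b)) hab]

end Multiset

namespace Polynomial

variable {K : Type*} [Field K]

theorem one_sub_C_mul_X_ne_zero (a : K) : (1 - C a * X : K[X]) ≠ 0 := fun h => by
  simpa using congrArg (eval 0) h

theorem roots_one_sub_C_mul_X {a : K} (ha : a ≠ 0) : (1 - C a * X : K[X]).roots = {a⁻¹} := by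
  rw [← neg_sub, roots_neg, ← C_1, roots_C_mul_X_sub_C _ ha, mul_one]

theorem multiset_prod_one_sub_C_mul_X_ne_zero (M : Multiset K) :
    (M.map fun a => 1 - C a * X).prod ≠ 0 :=
  Multiset.prod_ne_zero fun h => by
    obtain ⟨a, -, ha⟩ := Multiset.mem_map.mp h
    exact one_sub_C_mul_X_ne_zero a ha

theorem roots_multiset_prod_one_sub_C_mul_X [DecidableEq K] (M : Multiset K) :
    (M.map fun a => 1 - C a * X).prod.roots = (M.filter (· ≠ 0)).map (·⁻¹) := by
  induction M using Multiset.induction_on with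
  | empty => simp
  | cons a M ih =>
    rw [Multiset.map_cons, Multiset.prod_cons,
      roots_mul (mul_ne_zero (one_sub_C_mul_X_ne_zero a) (multiset_prod_one_sub_C_mul_X_ne_zero M)),
      ih]
    by_cases ha : a = 0
    · simp [ha]
    · rw [Multiset.filter_cons_of_pos (p := (· ≠ 0)) _ ha, roots_one_sub_C_mul_X ha,
        Multiset.map_cons, Multiset.singleton_add]

theorem filter_ne_zero_eq_of_multiset_prod_one_sub_C_mul_X_eq [DecidableEq K] {M N : Multiset K}
    (h : (M.map fun a => 1 - C a * X).prod = (N.map fun a => 1 - C a * X).prod) :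
    M.filter (· ≠ 0) = N.filter (· ≠ 0) := by
  have hroots := congrArg roots h
  rw [roots_multiset_prod_one_sub_C_mul_X, roots_multiset_prod_one_sub_C_mul_X] at hroots
  exact Multiset.map_injective inv_injective hroots

end Polynomial

namespace RatFunc

variable {K : Type*} [Field K]

theorem algebraMap_multiset_prod_one_sub_C_mul_X (M : Multiset K) :
    algebraMap (Polynomial K) (RatFunc K) (M.map fun a => 1 - Polynomial.C a * Polynomial.X).prod =
      (M.map fun a => 1 - C a * X).prod := by
  simp [map_multiset_prod, Multiset.map_map, algebraMap_C, algebraMap_X]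

theorem filter_ne_zero_add_eq_of_div_eq [DecidableEq K] {A B C D : Multiset K}
    (h : (A.map fun a => 1 - RatFunc.C a * X).prod / (B.map fun a => 1 - RatFunc.C a * X).prod =
      (C.map fun a => 1 - RatFunc.C a * X).prod / (D.map fun a => 1 - RatFunc.C a * X).prod) :
    (A + D).filter (· ≠ 0) = (C + B).filter (· ≠ 0) := by
  simp only [← algebraMap_multiset_prod_one_sub_C_mul_X] at h
  rw [div_eq_div_iff (algebraMap_ne_zero (Polynomial.multiset_prod_one_sub_C_mul_X_ne_zero B))
    (algebraMap_ne_zero (Polynomial.multiset_prod_one_sub_C_mul_X_ne_zero D)), ← map_mul,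
    ← map_mul] at h
  apply Polynomial.filter_ne_zero_eq_of_multiset_prod_one_sub_C_mul_X_eq
  simpa only [Multiset.map_add, Multiset.prod_add, mul_comm]
    using IsFractionRing.injective (Polynomial K) (RatFunc K) h

end RatFunc

namespace YoungDiagram

-- Reducible, so that lemmas about `content c` rewrite the explicit `c.2 - c.1` of the theorem.
abbrev content (c : ℕ × ℕ) : ℤ := (c.2 : ℤ) - c.1

def contents (μ : YoungDiagram) : Multiset ℤ := μ.cells.val.map content

theorem prod_cells_content {M : Type*} [CommMonoid M] (μ : YoungDiagram) (f : ℤ → M) :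
    ∏ c ∈ μ.cells, f (content c) = (μ.contents.map f).prod := by
  rw [Finset.prod_eq_multiset_prod, contents, Multiset.map_map]
  rfl

theorem card_contents (μ : YoungDiagram) : Multiset.card μ.contents = μ.cells.card :=
  Multiset.card_map _ _

theorem abs_lt_card_of_mem_contents {μ : YoungDiagram} {k : ℤ} (hk : k ∈ μ.contents) :
    |k| < μ.cells.card := by
  obtain ⟨⟨i, j⟩, hc, rfl⟩ := Multiset.mem_map.mp hk
  have hc : (i, j) ∈ μ := hc
  have hj : j < μ.cells.card :=
    (mem_iff_lt_rowLen.mp hc).trans_le (μ.rowLen_eq_card ▸ Finset.card_filter_le _ _)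
  have hi : i < μ.cells.card :=
    (mem_iff_lt_colLen.mp hc).trans_le (μ.colLen_eq_card ▸ Finset.card_filter_le _ _)
  rw [content, abs_lt]
  omega

/-- The `m`-th cell (counted from the corner) on the diagonal of content `k`. -/
def diagCell (k : ℤ) (m : ℕ) : ℕ × ℕ := (m + (-k).toNat, m + k.toNat)

theorem diagCell_injective (k : ℤ) : Function.Injective (diagCell k) := fun m n h => by
  simpa [diagCell] using congrArg Prod.fst h

theorem diagCell_content_min {c : ℕ × ℕ} : diagCell (content c) (min c.1 c.2) = c := by
  ext <;> simp only [diagCell, content] <;> omega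

theorem range_diagCell (k : ℤ) : Set.range (diagCell k) = {c | content c = k} := by
  ext c
  constructor
  · rintro ⟨m, rfl⟩
    simp only [Set.mem_ofPred_eq, content, diagCell]
    omega
  · rintro rfl
    exact ⟨_, diagCell_content_min⟩

noncomputable def diagIndices (μ : YoungDiagram) (k : ℤ) : Finset ℕ :=
  μ.cells.preimage (diagCell k) (diagCell_injective k).injOn

theorem card_diagIndices (μ : YoungDiagram) (k : ℤ) :
    (μ.diagIndices k).card = μ.contents.count k := by
  classical
  rw [diagIndices, Finset.card_preimage, range_diagCell, contents, Multiset.count_map]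
  simp only [Set.mem_ofPred_eq, eq_comm]
  rfl

theorem isLowerSet_diagIndices (μ : YoungDiagram) (k : ℤ) :
    IsLowerSet (μ.diagIndices k : Set ℕ) := fun m n hnm hm => by
  simp only [diagIndices, Finset.coe_preimage, Set.mem_preimage, Finset.mem_coe,
    mem_cells] at hm ⊢
  exact μ.up_left_mem (by omega) (by omega) hm

theorem mem_iff_min_lt_count_contents (μ : YoungDiagram) (c : ℕ × ℕ) :
    c ∈ μ ↔ min c.1 c.2 < μ.contents.count (content c) := by
  rw [← card_diagIndices, ← Finset.mem_range, ← Finset.eq_range_card_of_isLowerSet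
    (isLowerSet_diagIndices μ _), diagIndices, Finset.mem_preimage, diagCell_content_min,
    mem_cells]

theorem contents_injective : Function.Injective contents := fun μ ν h => by
  ext c
  rw [mem_cells, mem_cells, mem_iff_min_lt_count_contents, mem_iff_min_lt_count_contents, h]

theorem prod_cells_one_add_content_mul_X {K : Type*} [Field K] (μ : YoungDiagram) :
    ∏ c ∈ μ.cells, (1 + RatFunc.C ((content c : ℤ) : K) * RatFunc.X) =
      ((μ.contents.map fun k : ℤ => -(k : K)).map fun a => 1 - RatFunc.C a * RatFunc.X).prod := by
  rw [prod_cells_content μ (fun k => 1 + RatFunc.C (k : K) * RatFunc.X), Multiset.map_map]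
  congr 1
  refine Multiset.map_congr rfl fun k _ => ?_
  simp

theorem prod_cells_one_sub_content_add_mul_X {K : Type*} [Field K] (μ : YoungDiagram) (δ : K) :
    ∏ c ∈ μ.cells, (1 - RatFunc.C (((content c : ℤ) : K) + δ) * RatFunc.X) =
      ((μ.contents.map fun k : ℤ => (k : K) + δ).map fun a => 1 - RatFunc.C a * RatFunc.X).prod :=
    by
  rw [prod_cells_content μ (fun k => 1 - RatFunc.C ((k : K) + δ) * RatFunc.X), Multiset.map_map]
  rfl

theorem norm_le_of_mem_map_neg_contents {μ : YoungDiagram} {n : ℕ} (hμ : μ.cells.card ≤ n)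
    {a : ℂ} (ha : a ∈ μ.contents.map fun k : ℤ => -(k : ℂ)) : ‖a‖ ≤ n - 1 := by
  obtain ⟨k, hk, rfl⟩ := Multiset.mem_map.mp ha
  have hkn : |k| ≤ n - 1 := by linarith [abs_lt_card_of_mem_contents hk]
  rw [norm_neg, Complex.norm_intCast]
  exact_mod_cast hkn

theorem lt_norm_of_mem_map_contents_add {μ : YoungDiagram} {r s : ℕ} (hμ : μ.cells.card ≤ s)
    {δ : ℂ} (hδ : (r : ℝ) + s - 2 < ‖δ‖) {a : ℂ}
    (ha : a ∈ μ.contents.map fun k : ℤ => (k : ℂ) + δ) : (r : ℝ) - 1 < ‖a‖ := by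
  obtain ⟨k, hk, rfl⟩ := Multiset.mem_map.mp ha
  have hk_small : ‖(k : ℂ)‖ ≤ s - 1 := by
    simpa using norm_le_of_mem_map_neg_contents hμ (Multiset.mem_map_of_mem _ hk)
  have hkδ : ‖δ‖ - ‖(k : ℂ)‖ ≤ ‖(k : ℂ) + δ‖ := by
    simpa [add_comm] using norm_sub_norm_le δ (-(k : ℂ))
  linarith

theorem ne_zero_of_mem_map_contents_add {μ : YoungDiagram} {r s : ℕ} (hr : 1 ≤ r)
    (hμ : μ.cells.card ≤ s) {δ : ℂ} (hδ : (r : ℝ) + s - 2 < ‖δ‖) {a : ℂ}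
    (ha : a ∈ μ.contents.map fun k : ℤ => (k : ℂ) + δ) : a ≠ 0 :=
  norm_pos_iff.mp <|
    (sub_nonneg.mpr (by exact_mod_cast hr)).trans_lt (lt_norm_of_mem_map_contents_add hμ hδ ha)

end YoungDiagram

open YoungDiagram in
theorem youngDiagram_pairs_eq_of_ratFunc_eq_of_large_delta_general
    (r s t t' : ℕ) (hr : 1 ≤ r) (ht : t ≤ min r s) (ht' : t' ≤ min r s)
    (lL lR mL mR : YoungDiagram)
    (hlL : lL.cells.card = r - t) (hlR : lR.cells.card = s - t)
    (hmL : mL.cells.card = r - t') (hmR : mR.cells.card = s - t')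
    (δ : ℂ) (hδ : ((r : ℝ) + (s : ℝ) - 2) < ‖δ‖)
    (heq :
      (∏ c ∈ lL.cells, (1 + RatFunc.C (((c.2 : ℤ) - (c.1 : ℤ) : ℤ) : ℂ) * RatFunc.X)) /
          (∏ c ∈ lR.cells,
            (1 - RatFunc.C ((((c.2 : ℤ) - (c.1 : ℤ) : ℤ) : ℂ) + δ) * RatFunc.X)) =
        (∏ c ∈ mL.cells, (1 + RatFunc.C (((c.2 : ℤ) - (c.1 : ℤ) : ℤ) : ℂ) * RatFunc.X)) /
          (∏ c ∈ mR.cells,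
            (1 - RatFunc.C ((((c.2 : ℤ) - (c.1 : ℤ) : ℤ) : ℂ) + δ) * RatFunc.X))) :
    t = t' ∧ lL = mL ∧ lR = mR := by
  classical
  rw [prod_cells_one_add_content_mul_X, prod_cells_one_add_content_mul_X,
    prod_cells_one_sub_content_add_mul_X, prod_cells_one_sub_content_add_mul_X] at heq
  have hsplit := RatFunc.filter_ne_zero_add_eq_of_div_eq heq
  rw [Multiset.filter_add, Multiset.filter_add,
    Multiset.filter_eq_self.mpr fun _ ha => ne_zero_of_mem_map_contents_add hr (by omega) hδ ha,
    Multiset.filter_eq_self.mpr fun _ ha => ne_zero_of_mem_map_contents_add hr (by omega) hδ ha]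
    at hsplit
  obtain ⟨hL, hR⟩ := Multiset.eq_and_eq_of_add_eq_add_of_forall
    (p := fun a => ‖a‖ ≤ (r : ℝ) - 1) hsplit
    (fun _ ha => norm_le_of_mem_map_neg_contents (by omega) (Multiset.mem_of_mem_filter ha))
    (fun _ ha => norm_le_of_mem_map_neg_contents (by omega) (Multiset.mem_of_mem_filter ha))
    (fun _ ha => (lt_norm_of_mem_map_contents_add (by omega) hδ ha).not_ge)
    (fun _ ha => (lt_norm_of_mem_map_contents_add (by omega) hδ ha).not_ge)
  have hlR : lR = mR := contents_injective
    (Multiset.map_injective ((add_left_injective δ).comp Int.cast_injective) hR).symm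
  have htt' : t = t' := by
    have hcard : lR.cells.card = mR.cells.card := by rw [hlR]
    omega
  have hlL : lL = mL := contents_injective <| Multiset.map_injective
    (neg_injective.comp Int.cast_injective) <| Multiset.eq_of_filter_ne_eq_of_card_eq hL <| by
      simp only [Multiset.card_map, card_contents]
      omega
  exact ⟨htt', hlL, hlR⟩

/-- Let `λᴸ, λᴿ, μᴸ, μᴿ` be partitions (Young diagrams) with `|λᴸ| = r − t`, `|λᴿ| = s − t`,
`|μᴸ| = r − t'`, `|μᴿ| = s − t'` for some `0 ≤ t, t' ≤ min(r,s)`, with `r, s ≥ 1`, and let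
`δ ∈ ℂ` with `|δ| > r + s − 2`. If the rational functions
`∏_{u∈[λᴸ]} (1 + c(u) z) / ∏_{u∈[λᴿ]} (1 − (c(u)+δ) z)` for `λ` and `μ` coincide,
then `t = t'`, `λᴸ = μᴸ` and `λᴿ = μᴿ`. (The content of the cell in row `a`, column `b`
is `b − a`.) -/
theorem youngDiagram_pairs_eq_of_ratFunc_eq_of_large_delta
    (r s t t' : ℕ) (hr : 1 ≤ r) (hs : 1 ≤ s) (ht : t ≤ min r s) (ht' : t' ≤ min r s)
    (lL lR mL mR : YoungDiagram)
    (hlL : lL.cells.card = r - t) (hlR : lR.cells.card = s - t)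
    (hmL : mL.cells.card = r - t') (hmR : mR.cells.card = s - t')
    (δ : ℂ) (hδ : ((r : ℝ) + (s : ℝ) - 2) < ‖δ‖)
    (heq :
      (∏ c ∈ lL.cells, (1 + RatFunc.C (((c.2 : ℤ) - (c.1 : ℤ) : ℤ) : ℂ) * RatFunc.X)) /
          (∏ c ∈ lR.cells,
            (1 - RatFunc.C ((((c.2 : ℤ) - (c.1 : ℤ) : ℤ) : ℂ) + δ) * RatFunc.X)) =
        (∏ c ∈ mL.cells, (1 + RatFunc.C (((c.2 : ℤ) - (c.1 : ℤ) : ℤ) : ℂ) * RatFunc.X)) /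
          (∏ c ∈ mR.cells,
            (1 - RatFunc.C ((((c.2 : ℤ) - (c.1 : ℤ) : ℤ) : ℂ) + δ) * RatFunc.X))) :
    t = t' ∧ lL = mL ∧ lR = mR :=
  youngDiagram_pairs_eq_of_ratFunc_eq_of_large_delta_general r s t t' hr ht ht' lL lR mL mR hlL hlR
    hmL hmR δ hδ heq
end

section
/- Suppose p_1,...,p_n ∈ ℂ[X_1,...,X_m] and points v_1,...,v_n ∈ ℂ^m satisfy: the matrix (p_i(v_j)) is upper unitriangular-like in the sense that p_i(v_j) = 0 for j < i and p_i(v_i) = 1 (1 ≤ i ≤ n−1), and every polynomial q in the ℂ-algebra S generated by p_1,...,p_n and constants satisfies q(v_n) = k_1 q(v_1) + ... + k_{n−1} q(v_{n−1}) for fixed scalars k_1,...,k_{n−1} (independent of q). If moreover for each i < n there exists q ∈ S with q(v_i) ≠ q(v_n), then a contradiction arises; i.e., such a configuration is impossible. -/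
/-- Impossibility of the configuration in Li's argument: given polynomials `p_1,…,p_n` in a
`ℂ`-subalgebra `S` of `ℂ[X_1,…,X_m]` and points `v_1,…,v_n, v_{n+1}` (`v_{n+1}` playing the
role of "`v_n`" in the informal statement) with `p_i(v_j) = 0` for `j < i`, `p_i(v_i) = 1`,
such that every `q ∈ S` satisfies the fixed linear relation
`q(v_{n+1}) = ∑_j k_j q(v_j)`, and such that for each `i ≤ n` some `q ∈ S` separates
`v_i` from `v_{n+1}`, a contradiction arises. -/
theorem li_configuration_impossible (m n : ℕ)
    (S : Subalgebra ℂ (MvPolynomial (Fin m) ℂ))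
    (p : Fin n → MvPolynomial (Fin m) ℂ) (hp : ∀ i, p i ∈ S)
    (v : Fin (n + 1) → Fin m → ℂ)
    (htri : ∀ i j : Fin n, j < i → MvPolynomial.eval (v j.castSucc) (p i) = 0)
    (hdiag : ∀ i : Fin n, MvPolynomial.eval (v i.castSucc) (p i) = 1)
    (k : Fin n → ℂ)
    (hlin : ∀ q ∈ S, MvPolynomial.eval (v (Fin.last n)) q =
      ∑ j : Fin n, k j * MvPolynomial.eval (v j.castSucc) q)
    (hsep : ∀ i : Fin n, ∃ q ∈ S,
      MvPolynomial.eval (v i.castSucc) q ≠ MvPolynomial.eval (v (Fin.last n)) q) :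
    False := by
  have step : ∀ i : Fin n, (∀ j, i < j → k j = 0) → k i = 0 := by
    intro i hgt
    have hmain : ∀ q ∈ S, MvPolynomial.eval (v (Fin.last n)) (p i) *
        MvPolynomial.eval (v (Fin.last n)) q =
        k i * MvPolynomial.eval (v i.castSucc) q := by
      intro q hq
      have h := hlin (p i * q) (S.mul_mem (hp i) hq)
      simp only [map_mul] at h
      rw [h, Finset.sum_eq_single i]
      · rw [hdiag i]; ring
      · intro j _ hji
        rcases lt_or_gt_of_ne hji with hlt | hgt'
        · rw [htri i j hlt]; ring
        · rw [hgt j hgt']; ring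
      · simp
    by_cases hc : MvPolynomial.eval (v (Fin.last n)) (p i) = 0
    · have h1 := hmain 1 S.one_mem
      simpa [hc] using h1.symm
    · exfalso
      obtain ⟨q, hq, hne⟩ := hsep i
      have h1 := hmain 1 S.one_mem
      simp only [map_one, mul_one] at h1
      have hq' := hmain q hq
      rw [← h1] at hq'
      exact hne (mul_left_cancel₀ hc hq').symm
  have hk : ∀ i : Fin n, k i = 0 := by
    have : ∀ r : ℕ, ∀ i : Fin n, i.rev.val ≤ r → k i = 0 := by
      intro r
      induction r with
      | zero =>
        intro i hi
        apply step
        intro j hij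
        exfalso
        have h : (j.rev : ℕ) < i.rev := Fin.rev_lt_rev.mpr hij
        omega
      | succ r ih =>
        intro i hi
        apply step
        intro j hij
        apply ih
        have h := Fin.rev_lt_rev.mpr hij
        have : j.rev.val < i.rev.val := h
        omega
    intro i
    exact this i.rev.val i le_rfl
  have h1 := hlin 1 S.one_mem
  simp [hk] at h1
end
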